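/- Let g : ℝⁿ → ℝ be differentiable, let h : ℝⁿ → ℝ be convex, and set φ := g − h. Fix x₀ ∈ ℝⁿ and let 𝓛(x₀) denote the connected component containing x₀ of the sublevel set {x ∈ ℝⁿ : φ(x) ≤ φ(x₀)}. Assume ∇g is Lipschitz with constant L > 0 on 𝓛(x₀), and let x̄ ∈ 𝓛(x₀) satisfy φ(x) ≥ φ(x̄) for all x ∈ 𝓛(x₀). Let v₁ be a subgradient of h at x₀ that maximizes ‖∇g(x₀) − v‖ over all subgradients v of h at x₀, and set σ₁ := ‖∇g(x₀) − v₁‖. Assume additionally that σ₁ > 0, that q ∈ (0, 1/2), M > 0, and that the PLK-type inequality σ₁ ≥ M·(φ(x₀) − φ(x̄))^q holds. Then σ₁^{1−2q} ≥ M/(2L)^q. -/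

import Mathlib

/-!
The subgradient inequality at `x₀` makes `m y = g y - h x₀ - ⟪v₁, y - x₀⟫` a smooth majorant of
`φ` touching it at `x₀`, with `∇m = ∇g - v₁`, so `∇m x₀` has norm `σ₁`. By continuous induction
the whole segment of the gradient step `x₀ - L⁻¹ • ∇m x₀` stays in the sublevel component
`𝓛(x₀)`, where `∇m` is `L`-Lipschitz, so the descent lemma gives
`φ x₀ - φ x̄ ≥ σ₁² / (2L)`. Inserting this into the PLK inequality and solving for `σ₁` gives the
estimate.
-/

open RealInnerProductSpace

open Set Filter Topology

theorem HasDerivAt.eventually_nhdsGT_lt {f : ℝ → ℝ} {f' x : ℝ} (hf : HasDerivAt f f' x)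
    (hf' : f' < 0) : ∀ᶠ y in 𝓝[>] x, f y < f x := by
  filter_upwards [hf.hasDerivWithinAt.limsup_slope_le' (lt_irrefl x) hf', self_mem_nhdsWithin]
    with y hslope hxy
  exact (slope_neg_iff_of_le hxy.le).mp hslope

theorem le_of_hasDerivAt_le_affine {F F' : ℝ → ℝ} {a b t : ℝ} (ht : 0 ≤ t)
    (hF : ∀ s, HasDerivAt F (F' s) s) (hF' : ∀ s ∈ Ico 0 t, F' s ≤ -a + b * s) :
    F t ≤ F 0 - a * t + b * t ^ 2 / 2 := by
  have hB : ∀ s, HasDerivAt (fun s => F 0 - a * s + b * s ^ 2 / 2) (-a + b * s) s := by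
    intro s
    refine ((((hasDerivAt_id s).const_mul a).const_sub (F 0)).add
      (((hasDerivAt_pow 2 s).const_mul b).div_const 2)).congr_deriv ?_
    simp only [Nat.cast_ofNat]
    ring
  exact image_le_of_deriv_right_le_deriv_boundary
    (fun s _ => (hF s).continuousAt.continuousWithinAt) (fun s _ => (hF s).hasDerivWithinAt)
    (by simp) (fun s _ => (hB s).continuousAt.continuousWithinAt)
    (fun s _ => (hB s).hasDerivWithinAt) hF' ⟨ht, le_rfl⟩

theorem div_rpow_le_rpow_one_sub_two_mul {σ c q M Δ : ℝ} (hσ : 0 < σ) (hc : 0 < c) (hq : 0 ≤ q)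
    (hM : 0 ≤ M) (hΔ : σ ^ 2 / c ≤ Δ) (hMΔ : M * Δ ^ q ≤ σ) : M / c ^ q ≤ σ ^ (1 - 2 * q) := by
  have hpow : (σ ^ 2 / c) ^ q = σ ^ (2 * q) / c ^ q := by
    rw [Real.div_rpow (by positivity) hc.le, ← Real.rpow_natCast, ← Real.rpow_mul hσ.le]
    norm_num
  have hbound : M * (σ ^ (2 * q) / c ^ q) ≤ σ :=
    hpow ▸ (mul_le_mul_of_nonneg_left (Real.rpow_le_rpow (by positivity) hΔ hq) hM).trans hMΔ
  rw [Real.rpow_sub hσ, Real.rpow_one, le_div_iff₀ (Real.rpow_pos_of_pos hσ _)]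
  calc M / c ^ q * σ ^ (2 * q) = M * (σ ^ (2 * q) / c ^ q) := by ring
    _ ≤ σ := hbound

theorem Continuous.mem_connectedComponentIn_of_Icc {X : Type*} [TopologicalSpace X] {γ : ℝ → X}
    {S : Set X} {t : ℝ} (hγ : Continuous γ) (ht : 0 ≤ t) (hS : ∀ s ∈ Icc 0 t, γ s ∈ S) :
    ∀ s ∈ Icc 0 t, γ s ∈ connectedComponentIn S (γ 0) := by
  intro s hs
  refine (isPreconnected_Icc.image γ hγ.continuousOn).subset_connectedComponentIn
    (mem_image_of_mem γ ⟨le_rfl, ht⟩) ?_ (mem_image_of_mem γ hs)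
  rintro _ ⟨u, hu, rfl⟩
  exact hS u hu

/-- The set `𝓛(x₀)` of the paper. -/
def levelComponent {X : Type*} [TopologicalSpace X] (f : X → ℝ) (x₀ : X) : Set X :=
  connectedComponentIn {z | f z ≤ f x₀} x₀

section

variable {E : Type*} [NormedAddCommGroup E] [InnerProductSpace ℝ E]

theorem neg_inner_le_of_norm_sub_le {a d : E} {c : ℝ} (h : ‖a - d‖ ≤ c) :
    -⟪a, d⟫ ≤ -‖d‖ ^ 2 + c * ‖d‖ := by
  have hsplit : ⟪a, d⟫ = ‖d‖ ^ 2 + ⟪a - d, d⟫ := by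
    rw [inner_sub_left, real_inner_self_eq_norm_sq]; ring
  have hcs : -⟪a - d, d⟫ ≤ ‖a - d‖ * ‖d‖ := (neg_le_abs _).trans (abs_real_inner_le_norm _ _)
  nlinarith [norm_nonneg d]

theorem neg_inner_gradient_on_ray_le {f : E → ℝ} {G : E → E} {x₀ : E} {L s : ℝ}
    (hG : ∀ y ∈ levelComponent f x₀, ‖G y - G x₀‖ ≤ L * ‖y - x₀‖) (hs : 0 ≤ s)
    (hsK : x₀ - s • G x₀ ∈ levelComponent f x₀) :
    -⟪G (x₀ - s • G x₀), G x₀⟫ ≤ -‖G x₀‖ ^ 2 + L * ‖G x₀‖ ^ 2 * s := by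
  have h := neg_inner_le_of_norm_sub_le (hG _ hsK)
  rw [sub_sub_cancel_left, norm_neg, norm_smul, Real.norm_of_nonneg hs] at h
  linarith

variable [CompleteSpace E]

theorem HasGradientAt.hasDerivAt_comp_sub_smul {m : E → ℝ} {G x d : E} {s : ℝ}
    (hm : HasGradientAt m G (x - s • d)) :
    HasDerivAt (fun t : ℝ => m (x - t • d)) (-⟪G, d⟫) s := by
  have hray : HasDerivAt (fun t : ℝ => x - t • d) (-d) s := by
    simpa using ((hasDerivAt_id s).smul_const d).const_sub x
  exact ((hasGradientAt_iff_hasFDerivAt.mp hm).comp_hasDerivAt s hray).congr_deriv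
    (by simp [inner_neg_right])

theorem HasGradientAt.sub_const_sub_inner {f : E → ℝ} {f' x : E} (hf : HasGradientAt f f' x)
    (c : ℝ) (v x₀ : E) : HasGradientAt (fun y => f y - c - ⟪v, y - x₀⟫) (f' - v) x := by
  rw [hasGradientAt_iff_hasFDerivAt, map_sub]
  have hinner : HasFDerivAt (fun y => ⟪v, y - x₀⟫) (InnerProductSpace.toDual ℝ E v) x :=
    ((InnerProductSpace.toDual ℝ E v).hasFDerivAt.sub_const ⟪v, x₀⟫).congr_of_eventuallyEq
      (Eventually.of_forall fun y => by simp [inner_sub_right])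
  exact ((hasGradientAt_iff_hasFDerivAt.mp hf).sub_const c).sub hinner

theorem majorant_ray_descent {f m : E → ℝ} {G : E → E} {x₀ : E} {L t : ℝ}
    (hm : ∀ y, HasGradientAt m (G y) y) (hfm : ∀ y, f y ≤ m y) (hmx₀ : m x₀ = f x₀)
    (hG : ∀ y ∈ levelComponent f x₀, ‖G y - G x₀‖ ≤ L * ‖y - x₀‖) (ht : 0 ≤ t)
    (hlevel : ∀ s ∈ Icc 0 t, m (x₀ - s • G x₀) ≤ f x₀) :
    (∀ s ∈ Icc 0 t, x₀ - s • G x₀ ∈ levelComponent f x₀) ∧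
      m (x₀ - t • G x₀) ≤ f x₀ - ‖G x₀‖ ^ 2 * t + L * ‖G x₀‖ ^ 2 * t ^ 2 / 2 := by
  have hseg : ∀ s ∈ Icc 0 t, x₀ - s • G x₀ ∈ levelComponent f x₀ := by
    have hray : Continuous fun s : ℝ => x₀ - s • G x₀ := by fun_prop
    simpa [levelComponent] using
      hray.mem_connectedComponentIn_of_Icc ht fun s hs => (hfm _).trans (hlevel s hs)
  refine ⟨hseg, ?_⟩
  simpa [hmx₀] using le_of_hasDerivAt_le_affine ht (fun s => (hm _).hasDerivAt_comp_sub_smul)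
    fun s hs => neg_inner_gradient_on_ray_le hG hs.1 (hseg s (Ico_subset_Icc_self hs))

theorem majorant_gradient_step_descent {f m : E → ℝ} {G : E → E} {x₀ : E} {L : ℝ} (hL : 0 < L)
    (hm : ∀ y, HasGradientAt m (G y) y) (hfm : ∀ y, f y ≤ m y) (hmx₀ : m x₀ = f x₀)
    (hG : ∀ y ∈ levelComponent f x₀, ‖G y - G x₀‖ ≤ L * ‖y - x₀‖) :
    x₀ - L⁻¹ • G x₀ ∈ levelComponent f x₀ ∧
      f (x₀ - L⁻¹ • G x₀) ≤ f x₀ - ‖G x₀‖ ^ 2 / (2 * L) := by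
  set d := G x₀
  set ψ : ℝ → ℝ := fun s => m (x₀ - s • d)
  have hψ : ∀ s, HasDerivAt ψ (-⟪G (x₀ - s • d), d⟫) s :=
    fun s => (hm _).hasDerivAt_comp_sub_smul
  -- continuous induction: at the right end of a good interval the segment lies in `𝓛(x₀)`,
  -- so `ψ` has negative slope there
  have hlevel : Icc 0 L⁻¹ ⊆ {t | ψ t ≤ f x₀} := by
    obtain hd | hd := eq_or_ne d 0
    · intro t _
      simp [ψ, hd, hmx₀]
    have hψc : Continuous ψ := continuous_iff_continuousAt.mpr fun s => (hψ s).continuousAt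
    refine IsClosed.Icc_subset_of_forall_mem_nhdsGT_of_Icc_subset
      ((isClosed_le hψc continuous_const).inter isClosed_Icc) (by simp [ψ, hmx₀]) ?_
    intro t ht hIcc
    have htK := (majorant_ray_descent hm hfm hmx₀ hG ht.1 hIcc).1 t ⟨ht.1, le_rfl⟩
    have hLt : L * t < 1 := mul_inv_cancel₀ hL.ne' ▸ mul_lt_mul_of_pos_left ht.2 hL
    have hneg : -⟪G (x₀ - t • d), d⟫ < 0 := by
      refine (neg_inner_gradient_on_ray_le hG ht.1 htK).trans_lt ?_
      nlinarith [pow_pos (norm_pos_iff.mpr hd) 2]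
    filter_upwards [(hψ t).eventually_nhdsGT_lt hneg] with u hu
    exact hu.le.trans (hIcc ⟨ht.1, le_rfl⟩)
  have hT : 0 ≤ L⁻¹ := inv_nonneg.mpr hL.le
  obtain ⟨hseg, hdescent⟩ := majorant_ray_descent hm hfm hmx₀ hG hT hlevel
  refine ⟨hseg _ ⟨hT, le_rfl⟩, ?_⟩
  calc f (x₀ - L⁻¹ • d) ≤ ψ L⁻¹ := hfm _
    _ ≤ f x₀ - ‖d‖ ^ 2 * L⁻¹ + L * ‖d‖ ^ 2 * L⁻¹ ^ 2 / 2 := hdescent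
    _ = f x₀ - ‖d‖ ^ 2 / (2 * L) := by field_simp; ring

end

theorem PLK_lower_exponent_key_estimate_general
    (n : ℕ) (g h : EuclideanSpace ℝ (Fin n) → ℝ)
    (hg : Differentiable ℝ g)
    (φ : EuclideanSpace ℝ (Fin n) → ℝ) (hφ : φ = fun z => g z - h z)
    (x₀ : EuclideanSpace ℝ (Fin n))
    (L : ℝ) (hL : 0 < L)
    (hLip : ∀ y ∈ connectedComponentIn {z | φ z ≤ φ x₀} x₀,
      ∀ z ∈ connectedComponentIn {z | φ z ≤ φ x₀} x₀,
        ‖gradient g y - gradient g z‖ ≤ L * ‖y - z‖)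
    (xbar : EuclideanSpace ℝ (Fin n))
    (hmin : ∀ y ∈ connectedComponentIn {z | φ z ≤ φ x₀} x₀, φ xbar ≤ φ y)
    (v₁ : EuclideanSpace ℝ (Fin n))
    (hv₁ : ∀ y, h x₀ + ⟪v₁, y - x₀⟫ ≤ h y)
    (hσpos : 0 < ‖gradient g x₀ - v₁‖)
    (q : ℝ) (hq : q ∈ Set.Ioo (0 : ℝ) (1/2))
    (M : ℝ) (hM : 0 < M)
    (hPLK : M * (φ x₀ - φ xbar) ^ q ≤ ‖gradient g x₀ - v₁‖) :
    M / (2 * L) ^ q ≤ ‖gradient g x₀ - v₁‖ ^ (1 - 2 * q) := by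
  have hx₀ : x₀ ∈ levelComponent φ x₀ := mem_connectedComponentIn (le_refl (φ x₀))
  obtain ⟨hstep, hdecrease⟩ := majorant_gradient_step_descent (f := φ) (x₀ := x₀)
    (m := fun y => g y - h x₀ - ⟪v₁, y - x₀⟫) (G := fun y => gradient g y - v₁) hL
    (fun y => (hg y).hasGradientAt.sub_const_sub_inner _ _ _)
    (fun y => by rw [hφ]; linarith [hv₁ y]) (by simp [hφ])
    (fun y hy => by simpa using hLip y hy x₀ hx₀)
  refine div_rpow_le_rpow_one_sub_two_mul hσpos (by positivity) hq.1.le hM.le ?_ hPLK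
  linarith [hmin _ hstep]

/-- The key estimate in the proof of the inconsistency Theorem 6.2:
under the PLK-type inequality with lower exponent at a global minimizer of a
difference program over a level-set component, the stationarity measure σ₁
satisfies σ₁^(1-2q) ≥ M/(2L)^q. -/
theorem PLK_lower_exponent_key_estimate
    (n : ℕ) (g h : EuclideanSpace ℝ (Fin n) → ℝ)
    (hg : Differentiable ℝ g)
    (hh : ConvexOn ℝ Set.univ h)
    (φ : EuclideanSpace ℝ (Fin n) → ℝ) (hφ : φ = fun z => g z - h z)
    (x₀ : EuclideanSpace ℝ (Fin n))
    (L : ℝ) (hL : 0 < L)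
    (hLip : ∀ y ∈ connectedComponentIn {z | φ z ≤ φ x₀} x₀,
      ∀ z ∈ connectedComponentIn {z | φ z ≤ φ x₀} x₀,
        ‖gradient g y - gradient g z‖ ≤ L * ‖y - z‖)
    (xbar : EuclideanSpace ℝ (Fin n))
    (hxbar : xbar ∈ connectedComponentIn {z | φ z ≤ φ x₀} x₀)
    (hmin : ∀ y ∈ connectedComponentIn {z | φ z ≤ φ x₀} x₀, φ xbar ≤ φ y)
    (v₁ : EuclideanSpace ℝ (Fin n))
    (hv₁ : ∀ y, h x₀ + ⟪v₁, y - x₀⟫ ≤ h y)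
    (hmax : ∀ v : EuclideanSpace ℝ (Fin n),
      (∀ y, h x₀ + ⟪v, y - x₀⟫ ≤ h y) →
        ‖gradient g x₀ - v‖ ≤ ‖gradient g x₀ - v₁‖)
    (hσpos : 0 < ‖gradient g x₀ - v₁‖)
    (q : ℝ) (hq : q ∈ Set.Ioo (0 : ℝ) (1/2))
    (M : ℝ) (hM : 0 < M)
    (hPLK : M * (φ x₀ - φ xbar) ^ q ≤ ‖gradient g x₀ - v₁‖) :
    M / (2 * L) ^ q ≤ ‖gradient g x₀ - v₁‖ ^ (1 - 2 * q) :=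
  PLK_lower_exponent_key_estimate_general n g h hg φ hφ x₀ L hL hLip xbar hmin v₁ hv₁ hσpos q hq M
    hM hPLK
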